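/- arXiv:math/9907170 — 2 statements merged into one kernel-verified Lean document; each statement's English description precedes it below -/
import Mathlib

section
/- If â₋, â₊ satisfy [â₋,â₊]=1, then the deformed operators N = ((e^{λâ₊}−1)/λ)â₋, A₊ = â₊, A₋ = e^{λâ₊}â₋, M = 1, B₊ = ((1−e^{−λâ₊})/λ)², B₋ = e^{λâ₊}â₋² satisfy the deformed two-photon relations of U_λ(h₆), in particular [N,A₊] = (e^{λA₊}−1)/λ, [A₋,A₊] = e^{λA₊}, [A₋,B₊] = 2(1−e^{−λA₊})/λ, [A₋,B₋] = −λA₋², [N,B₊]=2B₊, and [A₊,B₊]=0. -/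
open PowerSeries

noncomputable section

/-- Formal differentiation `d/dα` as a linear operator on `ℂ⟦α⟧`. -/
def Dop : Module.End ℂ (PowerSeries ℂ) := (PowerSeries.derivative ℂ).toLinearMap

/-- Multiplication by a fixed formal power series, as a linear operator. -/
def mulOp (s : PowerSeries ℂ) : Module.End ℂ (PowerSeries ℂ) := LinearMap.mulLeft ℂ s

lemma mulOp_apply (a s : PowerSeries ℂ) : mulOp a s = a * s := rfl

lemma Dop_apply (s : PowerSeries ℂ) : Dop s = PowerSeries.derivative ℂ s := rfl

lemma deriv_rescale_exp (a : ℂ) :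
    PowerSeries.derivative ℂ (rescale a (exp ℂ)) = a • rescale a (exp ℂ) := by
  ext n
  rw [coeff_derivative, coeff_smul, coeff_rescale, coeff_rescale, coeff_exp, coeff_exp]
  simp only [map_div₀, map_one, map_natCast, smul_eq_mul]
  rw [Nat.factorial_succ]
  push_cast
  have h1 : ((n:ℂ)+1) ≠ 0 := by exact_mod_cast Nat.succ_ne_zero n
  have h2 : ((n.factorial :ℂ)) ≠ 0 := by exact_mod_cast Nat.cast_ne_zero.mpr n.factorial_ne_zero
  field_simp
  ring

lemma rescale_exp_mul (a : ℂ) : rescale a (exp ℂ) * rescale (-a) (exp ℂ) = 1 := by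
  rw [exp_mul_exp_eq_exp_add, add_neg_cancel, rescale_zero]
  simp

lemma comm1 (f g : PowerSeries ℂ) :
    ⁅mulOp f * Dop, mulOp g⁆ = mulOp (f * PowerSeries.derivative ℂ g) := by
  refine LinearMap.ext fun s => ?_
  simp only [Ring.lie_def, LinearMap.sub_apply, Module.End.mul_apply, mulOp_apply, Dop_apply,
    Derivation.leibniz, smul_eq_mul]
  ring

/-- The deformed one-boson realization of `U_λ(h₆)`:
`N = ((e^{λα}−1)/λ) d/dα`, `A₊ = α·`, `A₋ = e^{λα} d/dα`, `M = 1`,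
`B₊ = ((1−e^{−λα})/λ)²·`, `B₋ = e^{λα} d²/dα²` satisfy the deformed two-photon
relations; in particular `[N,A₊] = (e^{λA₊}−1)/λ`, `[A₋,A₊] = e^{λA₊}`,
`[A₋,B₊] = 2(1−e^{−λA₊})/λ`, `[A₋,B₋] = −λA₋²`, `[N,B₊] = 2B₊`,
`[A₊,B₊] = 0`. -/
theorem deformed_one_boson_realization (lam : ℂ) (hlam : lam ≠ 0) :
    let eP : PowerSeries ℂ := rescale lam (exp ℂ)      -- e^{λα}
    let eM : PowerSeries ℂ := rescale (-lam) (exp ℂ)   -- e^{−λα}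
    let N := mulOp (lam⁻¹ • (eP - 1)) * Dop
    let Ap := mulOp PowerSeries.X
    let Am := mulOp eP * Dop
    let M : Module.End ℂ (PowerSeries ℂ) := 1
    let Bp := mulOp ((lam⁻¹ • (1 - eM)) ^ 2)
    let Bm := mulOp eP * (Dop * Dop)
    ⁅N, Ap⁆ = lam⁻¹ • (mulOp eP - 1) ∧
    ⁅Am, Ap⁆ = mulOp eP * M ∧
    ⁅Am, Bp⁆ = (2 * lam⁻¹) • (1 - mulOp eM) ∧
    ⁅Am, Bm⁆ = -(lam • (Am * Am)) ∧
    ⁅N, Bp⁆ = 2 • Bp ∧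
    ⁅Ap, Bp⁆ = 0 := by
  intro eP eM N Ap Am M Bp Bm
  have heP : PowerSeries.derivative ℂ eP = C lam * eP := by
    rw [deriv_rescale_exp lam, smul_eq_C_mul]
  have heM : PowerSeries.derivative ℂ eM = -(C lam * eM) := by
    rw [deriv_rescale_exp (-lam), smul_eq_C_mul, map_neg, neg_mul]
  have hPM : eP * eM = 1 := rescale_exp_mul lam
  have hc : (C lam) * (C lam⁻¹) = 1 := by
    rw [← map_mul, mul_inv_cancel₀ hlam, map_one]
  have hsq : ((lam⁻¹ • (1 - eM)) ^ 2 : PowerSeries ℂ)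
      = (C lam⁻¹ * (1 - eM)) * (C lam⁻¹ * (1 - eM)) := by
    rw [smul_eq_C_mul, pow_two]
  have hBp : PowerSeries.derivative ℂ ((lam⁻¹ • (1 - eM)) ^ 2)
      = 2 * (C lam⁻¹)^2 * (C lam) * ((1 - eM) * eM) := by
    rw [hsq]
    simp only [Derivation.leibniz, derivative_C, map_sub, Derivation.map_one_eq_zero, heM, smul_eq_mul]
    ring
  refine ⟨?_, ?_, ?_, ?_, ?_, ?_⟩
  · rw [comm1, derivative_X, mul_one]
    refine LinearMap.ext fun s => ?_
    simp only [mulOp_apply, LinearMap.smul_apply, LinearMap.sub_apply, Module.End.one_apply,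
      smul_mul_assoc, sub_mul, one_mul, smul_sub]
  · rw [comm1, derivative_X, mul_one, mul_one]
  · rw [comm1, hBp]
    refine LinearMap.ext fun s => ?_
    simp only [mulOp_apply, LinearMap.smul_apply, LinearMap.sub_apply, Module.End.one_apply,
      smul_eq_C_mul, map_mul, map_ofNat]
    linear_combination (2 * (C lam⁻¹)^2 * (C lam) * (1 - eM) * s) * hPM
      + ((C lam⁻¹) * (2 - 2*eM) * s) * hc
  · refine LinearMap.ext fun s => ?_
    simp only [Am, Bm, Ring.lie_def, LinearMap.sub_apply, Module.End.mul_apply,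
      LinearMap.neg_apply, LinearMap.smul_apply, mulOp_apply, Dop_apply, Derivation.leibniz,
      smul_eq_mul, heP, smul_eq_C_mul, map_add, derivative_C]
    ring
  · rw [comm1, hBp]
    refine LinearMap.ext fun s => ?_
    simp only [Bp, mulOp_apply, LinearMap.smul_apply, two_smul, LinearMap.add_apply, hsq,
      smul_eq_C_mul, map_mul]
    linear_combination (2 * (C lam⁻¹)^3 * (C lam) * (1 - eM) * s) * hPM
      + (2 * (C lam⁻¹)^2 * (1-eM)^2 * s) * hc
  · refine LinearMap.ext fun s => ?_
    simp only [Ap, Bp, Ring.lie_def, LinearMap.sub_apply, Module.End.mul_apply, mulOp_apply,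
      LinearMap.zero_apply]
    ring

end
end

section
/- With â₊ = multiplication by α and â₋ = d/dα, the deformed operators B₊ = α², M = 1, N = ((e^{2λα²}−1)/(2λα)) d/dα satisfy [N, B₊] = (e^{2λB₊}−1)/λ, and together with B₋ = ((e^{2λα²}−1)/(2λα²)) d²/dα² + (e^{2λα²}/α + (1−e^{2λα²})/(2λα³)) d/dα they satisfy [B₋, B₊] = 4N + 2M e^{2λB₊} and [N, B₋] = −2B₋ − 4λN². -/
open PowerSeries

noncomputable section

/-- The formal power series `e^{cα²} = ∑ₖ cᵏ α^{2k}/k!`. -/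
def expSq (c : ℂ) : PowerSeries ℂ :=
  PowerSeries.mk fun n => if 2 ∣ n then c ^ (n / 2) / (Nat.factorial (n / 2)) else 0

/-- Formal division by `α` (valid when applied to series with zero constant
term). -/
def divX (f : PowerSeries ℂ) : PowerSeries ℂ :=
  PowerSeries.mk fun n => PowerSeries.coeff (n + 1) f

/-! With `e = e^{cα²}`, `h = (e − 1)/(cα²)` and `c = 2λ` one has `N = α h ∂` and
`B₋ = h ∂² + b ∂` with `2b = h'`. A commutator of differential operators is again one, so each
relation reduces to identities among the coefficients `h, h', h'', b, b', e`. All of them are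
combinations of `c α² h = e − 1`, of its derivative divided by `cα`, namely `α h' + 2h = 2e`,
and of the derivative of the latter. -/

namespace Derivation

open LinearMap (mulLeft mulLeft_apply)

variable {R A : Type*} [CommRing R] [CommRing A] [Algebra R A] (D : Derivation R A A)

theorem map_ofNat (n : ℕ) [n.AtLeastTwo] : D (ofNat(n) : A) = 0 :=
  D.map_natCast n

theorem lie_mulLeft_mul_mulLeft (a c : A) :
    ⁅mulLeft R a * (D : Module.End R A), mulLeft R c⁆ = mulLeft R (a * D c) := by
  refine LinearMap.ext fun p => ?_
  simp only [Ring.lie_def, LinearMap.sub_apply, Module.End.mul_apply, mulLeft_apply, coeFn_coe,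
    leibniz, smul_eq_mul]
  ring

theorem lie_secondOrder_mulLeft (a b c : A) :
    ⁅mulLeft R a * ((D : Module.End R A) * D) + mulLeft R b * D, mulLeft R c⁆ =
      mulLeft R (2 * a * D c) * D + mulLeft R (a * D (D c) + b * D c) := by
  refine LinearMap.ext fun p => ?_
  simp only [Ring.lie_def, LinearMap.sub_apply, LinearMap.add_apply, Module.End.mul_apply,
    mulLeft_apply, coeFn_coe, leibniz, smul_eq_mul, map_add]
  ring

theorem lie_firstOrder_secondOrder (n a b : A) :
    ⁅mulLeft R n * (D : Module.End R A),
        mulLeft R a * ((D : Module.End R A) * D) + mulLeft R b * D⁆ =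
      mulLeft R (n * D a - 2 * a * D n) * ((D : Module.End R A) * D) +
        mulLeft R (n * D b - a * D (D n) - b * D n) * D := by
  refine LinearMap.ext fun p => ?_
  simp only [Ring.lie_def, LinearMap.sub_apply, LinearMap.add_apply, Module.End.mul_apply,
    mulLeft_apply, coeFn_coe, leibniz, smul_eq_mul, map_add]
  ring

end Derivation

theorem divX_X_mul (f : ℂ⟦X⟧) : divX (X * f) = f := by
  ext n; simp [divX, coeff_succ_X_mul]

theorem X_mul_divX (f : ℂ⟦X⟧) : X * divX f = f - C (constantCoeff f) :=
  (sub_const_eq_X_mul_shift f).symm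

theorem divX_add (f g : ℂ⟦X⟧) : divX (f + g) = divX f + divX g := by
  ext n; simp [divX]

theorem divX_neg (f : ℂ⟦X⟧) : divX (-f) = -divX f := by
  ext n; simp [divX]

theorem coeff_zero_expSq (c : ℂ) : coeff 0 (expSq c) = 1 := by
  simp [expSq]

theorem coeff_one_expSq (c : ℂ) : coeff 1 (expSq c) = 0 := by
  simp [expSq]

theorem coeff_add_two_expSq (c : ℂ) (n : ℕ) :
    coeff (n + 2) (expSq c) * (n + 2) = 2 * c * coeff n (expSq c) := by
  obtain ⟨k, rfl | rfl⟩ := Nat.even_or_odd' n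
  · have hk : (k.factorial : ℂ) ≠ 0 := by exact_mod_cast k.factorial_ne_zero
    have hk1 : (k : ℂ) + 1 ≠ 0 := Nat.cast_add_one_ne_zero k
    have h1 : 2 ∣ 2 * k + 2 := ⟨k + 1, by ring⟩
    simp only [expSq, coeff_mk, if_pos h1, if_pos (dvd_mul_right 2 k),
      show (2 * k + 2) / 2 = k + 1 by omega, Nat.mul_div_cancel_left k two_pos, Nat.factorial_succ]
    push_cast
    field_simp
    ring
  · have h1 : ¬ 2 ∣ 2 * k + 1 := by omega
    have h2 : ¬ 2 ∣ 2 * k + 1 + 2 := by omega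
    simp [expSq, h1, h2]

theorem derivative_expSq (c : ℂ) : d⁄dX ℂ (expSq c) = C (2 * c) * X * expSq c := by
  ext n
  rw [coeff_derivative, mul_assoc, coeff_C_mul]
  rcases n with _ | n
  · simp [coeff_one_expSq]
  · rw [coeff_succ_X_mul, ← coeff_add_two_expSq]
    push_cast
    ring

def expSqQuot (c : ℂ) : ℂ⟦X⟧ := c⁻¹ • divX (divX (expSq c - 1))

theorem X_mul_X_mul_divX_divX_expSq_sub_one (c : ℂ) :
    X * (X * divX (divX (expSq c - 1))) = expSq c - 1 := by
  have h0 : constantCoeff (expSq c - 1) = 0 := by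
    rw [← coeff_zero_eq_constantCoeff_apply, map_sub, coeff_zero_expSq, coeff_zero_one, sub_self]
  have h1 : constantCoeff (divX (expSq c - 1)) = 0 := by
    rw [← coeff_zero_eq_constantCoeff_apply, divX, coeff_mk]
    simp [coeff_one_expSq]
  rw [X_mul_divX, h1, map_zero, sub_zero, X_mul_divX, h0, map_zero, sub_zero]

theorem smul_divX_expSq_sub_one (c : ℂ) : c⁻¹ • divX (expSq c - 1) = X * expSqQuot c := by
  rw [expSqQuot, mul_smul_comm, ← divX_X_mul (X * divX (divX (expSq c - 1))),
    X_mul_X_mul_divX_divX_expSq_sub_one]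

section

variable {c : ℂ}

theorem C_mul_X_sq_mul_expSqQuot (hc : c ≠ 0) : C c * (X ^ 2 * expSqQuot c) = expSq c - 1 := by
  have hinv : C c * C c⁻¹ = (1 : ℂ⟦X⟧) := by
    rw [← map_mul, mul_inv_cancel₀ hc, map_one]
  rw [expSqQuot, smul_eq_C_mul]
  linear_combination X_mul_X_mul_divX_divX_expSq_sub_one c +
    X ^ 2 * divX (divX (expSq c - 1)) * hinv

theorem X_mul_derivative_expSqQuot_add_two_mul (hc : c ≠ 0) :
    X * d⁄dX ℂ (expSqQuot c) + 2 * expSqQuot c = 2 * expSq c := by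
  have hd := congrArg (d⁄dX ℂ) (C_mul_X_sq_mul_expSqQuot hc)
  simp only [Derivation.leibniz, derivative_C, derivative_pow, derivative_X, map_sub,
    derivative_one, derivative_expSq, smul_eq_mul] at hd
  have hCX : C c * X ≠ 0 := mul_ne_zero (by simpa using hc) X_ne_zero
  refine mul_left_cancel₀ hCX ?_
  rw [map_mul, map_ofNat] at hd
  linear_combination hd

theorem two_mul_divX_expSq_sub (hc : c ≠ 0) :
    2 * divX (expSq c + c⁻¹ • divX (divX (1 - expSq c))) = d⁄dX ℂ (expSqQuot c) := by
  have hsub : expSq c + c⁻¹ • divX (divX (1 - expSq c)) = expSq c - expSqQuot c := by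
    rw [← neg_sub, divX_neg, divX_neg, smul_neg, expSqQuot, ← sub_eq_add_neg]
  have hX : 2 * (expSq c - expSqQuot c) = X * d⁄dX ℂ (expSqQuot c) := by
    linear_combination (X_mul_derivative_expSqQuot_add_two_mul hc).symm
  rw [hsub, two_mul, ← divX_add, ← two_mul, hX, divX_X_mul]

-- The `∂²`- and `∂`-coefficients of `[N, B₋] = −2B₋ − 4λN²` for `c = 2λ`.
theorem expSqQuot_identity_order_two (hc : c ≠ 0) :
    X * expSqQuot c * d⁄dX ℂ (expSqQuot c) - 2 * expSqQuot c * d⁄dX ℂ (X * expSqQuot c) =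
      -2 * expSqQuot c - 2 * C c * (X * expSqQuot c) ^ 2 := by
  simp only [Derivation.leibniz, derivative_X, smul_eq_mul]
  linear_combination (-expSqQuot c) * X_mul_derivative_expSqQuot_add_two_mul hc +
    2 * expSqQuot c * C_mul_X_sq_mul_expSqQuot hc

theorem expSqQuot_identity_order_one (hc : c ≠ 0) {b : ℂ⟦X⟧}
    (hb : 2 * b = d⁄dX ℂ (expSqQuot c)) :
    X * expSqQuot c * d⁄dX ℂ b - expSqQuot c * d⁄dX ℂ (d⁄dX ℂ (X * expSqQuot c)) -
        b * d⁄dX ℂ (X * expSqQuot c) =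
      -2 * b - 2 * C c * (X * expSqQuot c) * d⁄dX ℂ (X * expSqQuot c) := by
  set h := expSqQuot c
  have hsq := C_mul_X_sq_mul_expSqQuot hc
  have hode := X_mul_derivative_expSqQuot_add_two_mul hc
  have hode' := congrArg (d⁄dX ℂ) hode
  have hb' := congrArg (d⁄dX ℂ) hb
  simp only [Derivation.leibniz, derivative_X, derivative_expSq, Derivation.map_ofNat,
    Derivation.map_one_eq_zero, smul_eq_mul, map_add, map_mul, map_ofNat] at hode' hb' ⊢
  have : CharZero ℂ⟦X⟧ := RingHom.charZero constantCoeff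
  refine mul_left_cancel₀ (two_ne_zero (α := ℂ⟦X⟧)) ?_
  linear_combination X * h * hb' + (2 - h - X * d⁄dX ℂ h) * hb - h * hode' +
    (2 * C c * X * h - d⁄dX ℂ h) * hode + 2 * d⁄dX ℂ h * hsq

end

/-- The type III deformed operators `B₊ = α²·`, `M = 1`,
`N = ((e^{2λα²}−1)/(2λα)) d/dα` and
`B₋ = ((e^{2λα²}−1)/(2λα²)) d²/dα² + (e^{2λα²}/α + (1−e^{2λα²})/(2λα³)) d/dα`
of the quantum `gl(2)` subalgebra of `U_λ(h₆)` satisfy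
`[N,B₊] = (e^{2λB₊}−1)/λ`, `[B₋,B₊] = 4N + 2M e^{2λB₊}` and
`[N,B₋] = −2B₋ − 4λN²`. -/
theorem deformed_gl2_sector (lam : ℂ) (hlam : lam ≠ 0) :
    let e2 : PowerSeries ℂ := expSq (2 * lam)  -- e^{2λα²}
    let Bp := mulOp (PowerSeries.X ^ 2)
    let M : Module.End ℂ (PowerSeries ℂ) := 1
    let N := mulOp ((2 * lam)⁻¹ • divX (e2 - 1)) * Dop
    let Bm := mulOp ((2 * lam)⁻¹ • divX (divX (e2 - 1))) * (Dop * Dop) +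
      mulOp (divX (e2 + (2 * lam)⁻¹ • divX (divX (1 - e2)))) * Dop
    ⁅N, Bp⁆ = lam⁻¹ • (mulOp e2 - 1) ∧
    ⁅Bm, Bp⁆ = 4 • N + 2 • (M * mulOp e2) ∧
    ⁅N, Bm⁆ = -(2 • Bm) - (4 * lam) • (N * N) := by
  intro e2 Bp M N Bm
  simp only [e2, Bp, M, N, Bm, mulOp, Dop, smul_divX_expSq_sub_one]
  have hc : 2 * lam ≠ 0 := mul_ne_zero two_ne_zero hlam
  have hb := two_mul_divX_expSq_sub hc
  have hsq := C_mul_X_sq_mul_expSqQuot hc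
  have hode := X_mul_derivative_expSqQuot_add_two_mul hc
  have hinv : C lam⁻¹ * C lam = 1 := by rw [← map_mul, inv_mul_cancel₀ hlam, map_one]
  rw [map_mul, map_ofNat] at hsq
  rw [show (2 * lam)⁻¹ • divX (divX (expSq (2 * lam) - 1)) = expSqQuot (2 * lam) from rfl]
  generalize divX (expSq (2 * lam) + (2 * lam)⁻¹ • divX (divX (1 - expSq (2 * lam)))) = b
    at hb ⊢
  rw [Derivation.lie_mulLeft_mul_mulLeft, Derivation.lie_secondOrder_mulLeft,
    Derivation.lie_firstOrder_secondOrder, expSqQuot_identity_order_two hc,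
    expSqQuot_identity_order_one hc hb]
  refine ⟨?_, ?_, ?_⟩ <;> refine LinearMap.ext fun p => ?_ <;>
    simp only [LinearMap.sub_apply, LinearMap.add_apply, LinearMap.neg_apply,
      LinearMap.smul_apply, Module.End.mul_apply, Module.End.one_apply, LinearMap.mulLeft_apply,
      Derivation.coeFn_coe, Derivation.leibniz, Derivation.map_one_eq_zero, derivative_X, pow_two,
      smul_eq_mul, smul_eq_C_mul, map_add, map_mul, map_ofNat]
  · linear_combination (C lam⁻¹ * p) * hsq - 2 * X ^ 2 * expSqQuot (2 * lam) * p * hinv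
  · linear_combination (X * p) * hb + p * hode
  · ring

end
end
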